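/- arXiv:2007.07362 — 4 statements merged into one kernel-verified Lean document; each statement's English description precedes it below -/
import Mathlib

section
/- Let P be a graded poset with minimum element 0̂ and maximum element 1̂, and let 0̂ = z₀ < z₁ < ⋯ < z_{m-1} < z_m = 1̂ be a chain in P (with m ≥ 1). Then the number of chains in the poset of intervals I(P) that contain the interval (0̂,1̂) and whose support — the set of all endpoints u and v of the intervals (u,v) in the chain — equals {z₀, z₁, …, z_m}, is exactly Pell(m) + Pell(m+1), where the Pell numbers are defined by Pell(1) = 1, Pell(2) = 2 and Pell(k) = 2·Pell(k−1) + Pell(k−2) for k ≥ 3. -/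
/-- The Pell numbers, with `pellNum 1 = 1`, `pellNum 2 = 2` and
`pellNum k = 2 * pellNum (k-1) + pellNum (k-2)` for `k ≥ 3`. -/
def pellNum : ℕ → ℕ
  | 0 => 0
  | 1 => 1
  | (k + 2) => 2 * pellNum (k + 1) + pellNum k

/-! For `m ≥ 2`, deleting the top interval `T = [z₀, z_m]` from a counted chain `C` leaves a
nonempty chain. Every inner point `z_k` is an endpoint of an interval below its greatest element
`J`, so `J` is one of `[z₁, z_m]`, `[z₀, z_{m-1}]`, `[z₁, z_{m-1}]`, and `C ↦ C.erase T` is a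
bijection onto the chains with top `J` whose support is the part of the `z`-chain spanned by `J`.
Hence the count `f m` satisfies `f (m + 2) = 2 f (m + 1) + f m`, with `f 0 = 1` and `f 1 = 3`
(the chains `{T}`, `{[z₀, z₀], T}`, `{[z₁, z₁], T}`), exactly as `Pell m + Pell (m + 1)` does. -/

open Set

theorem IsChain.exists_isGreatest {α : Type*} [PartialOrder α] {s : Finset α}
    (hs : IsChain (· ≤ ·) (s : Set α)) (hne : s.Nonempty) : ∃ a, IsGreatest (s : Set α) a := by
  obtain ⟨a, ha⟩ := s.exists_maximal hne
  exact ⟨a, ha.prop, fun b hb => (hs.total hb ha.prop).elim id (ha.2 hb)⟩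

theorem Set.subset_of_subset_insert_insert {α : Type*} [PartialOrder α] {X Y : Set α}
    {a b c d : α} (hX : X ⊆ Icc c d) (hc : c ∈ Y) (hd : d ∈ Y) (hac : a ≤ c) (hdb : d ≤ b)
    (h : X ⊆ insert a (insert b Y)) : X ⊆ Y := by
  intro x hx
  rcases h hx with rfl | rfl | hxY
  · exact le_antisymm hac (hX hx).1 ▸ hc
  · exact le_antisymm (hX hx).2 hdb ▸ hd
  · exact hxY

theorem Set.ncard_union_union {α : Type*} {s t u : Set α} (hst : Disjoint s t)
    (hsu : Disjoint s u) (htu : Disjoint t u) (hs : s.Finite) (ht : t.Finite) (hu : u.Finite) :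
    (s ∪ t ∪ u).ncard = s.ncard + t.ncard + u.ncard := by
  rw [ncard_union_eq (disjoint_union_left.2 ⟨hsu, htu⟩) (hs.union ht) hu,
    ncard_union_eq hst hs ht]

namespace IntervalChain

open Classical

variable {P : Type*} [PartialOrder P]

def support (C : Finset (NonemptyInterval P)) : Set P :=
  {x | ∃ I ∈ C, I.fst = x ∨ I.snd = x}

def chainsWithSupport (T : NonemptyInterval P) (S : Set P) : Set (Finset (NonemptyInterval P)) :=
  {C | IsChain (· ≤ ·) (C : Set (NonemptyInterval P)) ∧ T ∈ C ∧ support C = S}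

def chainsWithTopTwo (T J : NonemptyInterval P) (S : Set P) :
    Set (Finset (NonemptyInterval P)) :=
  {C ∈ chainsWithSupport T S | IsGreatest (C.erase T : Set (NonemptyInterval P)) J}

variable {C : Finset (NonemptyInterval P)} {I J J' T : NonemptyInterval P} {S S' : Set P} {x : P}

theorem fst_mem_support (hI : I ∈ C) : I.fst ∈ support C := ⟨I, hI, .inl rfl⟩

theorem snd_mem_support (hI : I ∈ C) : I.snd ∈ support C := ⟨I, hI, .inr rfl⟩

theorem support_insert : support (insert I C) = insert I.fst (insert I.snd (support C)) := by
  ext x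
  simp only [support, Finset.mem_insert, mem_ofPred_eq, mem_insert_iff]
  grind

theorem support_singleton : support {I} = {I.fst, I.snd} := by
  ext x
  simp only [support, Finset.mem_singleton, mem_ofPred_eq, mem_insert_iff, mem_singleton_iff]
  grind

theorem support_subset_Icc_iff : support C ⊆ Icc J.fst J.snd ↔ ∀ I ∈ C, I ≤ J := by
  simp only [NonemptyInterval.le_def]
  constructor
  · intro h I hI
    exact ⟨(h (fst_mem_support hI)).1, (h (snd_mem_support hI)).2⟩
  · rintro h x ⟨I, hI, rfl | rfl⟩
    · exact ⟨(h I hI).1, I.fst_le_snd.trans (h I hI).2⟩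
    · exact ⟨(h I hI).1.trans I.fst_le_snd, (h I hI).2⟩

theorem mem_support_erase (hx : x ∈ support C) (h₁ : x ≠ T.fst) (h₂ : x ≠ T.snd) :
    x ∈ support (C.erase T) := by
  obtain ⟨I, hI, hIx⟩ := hx
  refine ⟨I, Finset.mem_erase.2 ⟨?_, hI⟩, hIx⟩
  rintro rfl
  rcases hIx with rfl | rfl <;> simp at h₁ h₂

theorem chainsWithSupport_finite (hS : S.Finite) : (chainsWithSupport T S).Finite := by
  have hX : {I : NonemptyInterval P | I.toProd ∈ S ×ˢ S}.Finite :=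
    (hS.prod hS).preimage NonemptyInterval.toProd_injective.injOn
  refine (hX.toFinset.powerset : Set (Finset (NonemptyInterval P))).toFinite.subset ?_
  rintro C ⟨-, -, hC⟩
  rw [Finset.mem_coe, Finset.mem_powerset]
  intro I hI
  rw [Finite.mem_toFinset]
  exact ⟨hC ▸ fst_mem_support hI, hC ▸ snd_mem_support hI⟩

theorem singleton_mem_chainsWithSupport : {T} ∈ chainsWithSupport T {T.fst, T.snd} :=
  ⟨by rw [Finset.coe_singleton]; exact IsChain.singleton, Finset.mem_singleton_self T,
    support_singleton⟩

theorem chainsWithSupport_pure (x : P) :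
    chainsWithSupport (NonemptyInterval.pure x) {x} = {{NonemptyInterval.pure x}} := by
  ext C
  constructor
  · rintro ⟨-, hxC, hC⟩
    refine Finset.eq_singleton_iff_unique_mem.2 ⟨hxC, fun I hI => NonemptyInterval.ext ?_⟩
    have hfst : I.fst ∈ ({x} : Set P) := hC ▸ fst_mem_support hI
    have hsnd : I.snd ∈ ({x} : Set P) := hC ▸ snd_mem_support hI
    exact Prod.ext hfst hsnd
  · rintro rfl
    simpa using singleton_mem_chainsWithSupport (T := NonemptyInterval.pure x)

theorem exists_mem_chainsWithTopTwo (hC : C ∈ chainsWithSupport T S)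
    (hne : (C.erase T).Nonempty) : ∃ J, C ∈ chainsWithTopTwo T J S := by
  obtain ⟨J, hJ⟩ := (hC.1.mono (by simp)).exists_isGreatest hne
  exact ⟨J, hC, hJ⟩

theorem chainsWithTopTwo_subset : chainsWithTopTwo T J S ⊆ chainsWithSupport T S :=
  sep_subset _ _

theorem disjoint_chainsWithTopTwo (h : J ≠ J') :
    Disjoint (chainsWithTopTwo T J S) (chainsWithTopTwo T J' S) :=
  disjoint_left.2 fun _ hJ hJ' => h (hJ.2.unique hJ'.2)

theorem disjoint_singleton_chainsWithTopTwo : Disjoint {{T}} (chainsWithTopTwo T J S) :=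
  disjoint_singleton_left.2 fun h => by simpa using h.2.1

theorem bijOn_erase_chainsWithTopTwo (hJT : J < T) (hS' : S' ⊆ Icc J.fst J.snd)
    (hJ₁ : J.fst ∈ S') (hJ₂ : J.snd ∈ S') (hS : S = insert T.fst (insert T.snd S')) :
    BijOn (·.erase T) (chainsWithTopTwo T J S) (chainsWithSupport J S') := by
  have hTJ := NonemptyInterval.le_def.1 hJT.le
  refine ⟨?_, ?_, ?_⟩
  · rintro C ⟨⟨hchain, hTC, hC⟩, hJ⟩
    have hJC := hJ.1
    have hX : support (C.erase T) ⊆ Icc J.fst J.snd :=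
      support_subset_Icc_iff.2 fun I hI => hJ.2 hI
    have hins : insert T.fst (insert T.snd (support (C.erase T))) = S := by
      rw [← support_insert, Finset.insert_erase hTC, hC]
    refine ⟨hchain.mono (by simp), hJC, ?_⟩
    rw [hS] at hins
    -- An endpoint of `T` lying in `[J.fst, J.snd]` is an endpoint of `J` (as `J ≤ T`), so the
    -- endpoints of `T` cancel from both sides of `hins`.
    have hsub (Y : Set P) : Y ⊆ insert T.fst (insert T.snd Y) :=
      (subset_insert _ _).trans (subset_insert _ _)
    exact Subset.antisymm
      (subset_of_subset_insert_insert hX hJ₁ hJ₂ hTJ.1 hTJ.2 (hins ▸ hsub _))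
      (subset_of_subset_insert_insert hS' (fst_mem_support hJC) (snd_mem_support hJC)
        hTJ.1 hTJ.2 (hins ▸ hsub _))
  · intro C₁ h₁ C₂ h₂ h
    rw [← Finset.insert_erase h₁.1.2.1, ← Finset.insert_erase h₂.1.2.1]
    exact congrArg (insert T) h
  · rintro C ⟨hchain, hJC, hC⟩
    have hle : ∀ I ∈ C, I ≤ J := support_subset_Icc_iff.1 (hC ▸ hS')
    have hTC : T ∉ C := fun h => hJT.not_ge (hle T h)
    refine ⟨insert T C, ⟨⟨?_, Finset.mem_insert_self _ _, ?_⟩, ?_⟩, Finset.erase_insert hTC⟩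
    · rw [Finset.coe_insert]
      exact hchain.insert fun I hI _ => .inr ((hle I hI).trans hJT.le)
    · rw [support_insert, hC, hS]
    · rw [Finset.erase_insert hTC]
      exact ⟨hJC, fun I hI => hle I hI⟩

-- The chain is indexed by `ℕ` so that the chains met in the recursion are again `z '' Icc a b`.
variable {z : ℕ → P} {a b : ℕ}

theorem exists_toProd_eq (hz : MonotoneOn z (Icc a b)) {i j : ℕ} (hi : a ≤ i) (hij : i ≤ j)
    (hj : j ≤ b) : ∃ J : NonemptyInterval P, J.toProd = (z i, z j) :=
  ⟨⟨(z i, z j), hz ⟨hi, hij.trans hj⟩ ⟨hi.trans hij, hj⟩ hij⟩, rfl⟩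

theorem ncard_chainsWithTopTwo_image_Icc {a' b' : ℕ} (hz : StrictMonoOn z (Icc a b))
    (ha : a ≤ a') (ha' : a' ≤ a + 1) (hb : b' ≤ b) (hb' : b ≤ b' + 1) (hab' : a' ≤ b')
    (hne : a < a' ∨ b' < b) (hT : T.toProd = (z a, z b)) (hJ : J.toProd = (z a', z b')) :
    (chainsWithTopTwo T J (z '' Icc a b)).ncard =
      (chainsWithSupport J (z '' Icc a' b')).ncard := by
  have hsub : Icc a' b' ⊆ Icc a b := Icc_subset_Icc ha hb
  have hJT : J < T := by
    refine lt_of_le_of_ne (NonemptyInterval.le_def.2 ?_) fun h => ?_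
    · rw [hT, hJ]
      exact ⟨hz.monotoneOn ⟨le_rfl, by omega⟩ ⟨ha, by omega⟩ ha,
        hz.monotoneOn ⟨by omega, hb⟩ ⟨by omega, le_rfl⟩ hb⟩
    · have h' := congrArg NonemptyInterval.toProd h
      rw [hT, hJ, Prod.mk.injEq] at h'
      have := hz.injOn ⟨ha, by omega⟩ ⟨le_rfl, by omega⟩ h'.1
      have := hz.injOn ⟨by omega, hb⟩ ⟨by omega, le_rfl⟩ h'.2
      omega
  have hIcc : Icc a b = insert a (insert b (Icc a' b')) := by
    ext k
    simp only [mem_Icc, mem_insert_iff]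
    omega
  refine (bijOn_erase_chainsWithTopTwo hJT ?_ ?_ ?_ ?_).ncard_eq
  · rintro _ ⟨k, hk, rfl⟩
    rw [hJ]
    exact ⟨hz.monotoneOn (hsub ⟨le_rfl, hab'⟩) (hsub hk) hk.1,
      hz.monotoneOn (hsub hk) (hsub ⟨hab', le_rfl⟩) hk.2⟩
  · rw [hJ]
    exact mem_image_of_mem z ⟨le_rfl, hab'⟩
  · rw [hJ]
    exact mem_image_of_mem z ⟨hab', le_rfl⟩
  · rw [hIcc, image_insert_eq, image_insert_eq, hT]

theorem apply_mem_support_erase (hz : InjOn z (Icc a b)) (hT : T.toProd = (z a, z b))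
    (hC : support C = z '' Icc a b) {k : ℕ} (hk : k ∈ Ioo a b) :
    z k ∈ support (C.erase T) := by
  have hk' := Ioo_subset_Icc_self hk
  refine mem_support_erase (hC ▸ mem_image_of_mem z hk') (fun h => ?_) (fun h => ?_)
  · rw [hT] at h
    exact hk.1.ne' (hz hk' (left_mem_Icc.2 (hk.1.le.trans hk.2.le)) h)
  · rw [hT] at h
    exact hk.2.ne (hz hk' (right_mem_Icc.2 (hk.1.le.trans hk.2.le)) h)

theorem exists_indices_of_mem_chainsWithTopTwo (hz : StrictMonoOn z (Icc a b))
    (hT : T.toProd = (z a, z b)) (hC : C ∈ chainsWithTopTwo T J (z '' Icc a b)) :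
    ∃ i j, a ≤ i ∧ i ≤ j ∧ j ≤ b ∧ ¬(i = a ∧ j = b) ∧ (∀ k ∈ Ioo a b, i ≤ k ∧ k ≤ j) ∧
      J.toProd = (z i, z j) := by
  obtain ⟨⟨-, -, hsupp⟩, hJ⟩ := hC
  obtain ⟨hJT, hJC⟩ := Finset.mem_erase.1 hJ.1
  obtain ⟨i, hi, hzi⟩ := hsupp ▸ fst_mem_support hJC
  obtain ⟨j, hj, hzj⟩ := hsupp ▸ snd_mem_support hJC
  have hJprod : J.toProd = (z i, z j) := by rw [hzi, hzj]
  have hIcc : support (C.erase T) ⊆ Icc J.fst J.snd :=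
    support_subset_Icc_iff.2 fun I hI => hJ.2 hI
  refine ⟨i, j, hi.1, (hz.le_iff_le hi hj).1 (hzi ▸ hzj ▸ J.fst_le_snd), hj.2, ?_,
    fun k hk => ?_, hJprod⟩
  · rintro ⟨rfl, rfl⟩
    exact hJT (NonemptyInterval.ext (hJprod.trans hT.symm))
  · have hk' := Ioo_subset_Icc_self hk
    have := hIcc (apply_mem_support_erase hz.injOn hT hsupp hk)
    rw [← hzi, ← hzj] at this
    exact ⟨(hz.le_iff_le hi hk').1 this.1, (hz.le_iff_le hk' hj).1 this.2⟩

theorem ncard_chainsWithSupport_image_Icc_self (hT : T.toProd = (z a, z a)) :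
    (chainsWithSupport T (z '' Icc a a)).ncard = 1 := by
  obtain rfl : T = NonemptyInterval.pure (z a) := NonemptyInterval.ext hT
  rw [Icc_self, image_singleton, chainsWithSupport_pure, ncard_singleton]

theorem ncard_chainsWithSupport_image_Icc_succ (hz : StrictMonoOn z (Icc a (a + 1)))
    (hT : T.toProd = (z a, z (a + 1))) :
    (chainsWithSupport T (z '' Icc a (a + 1))).ncard = 3 := by
  have hS : z '' Icc a (a + 1) = {T.fst, T.snd} := by
    rw [hT, ← image_pair z]
    congr 1
    ext k
    simp only [mem_Icc, mem_insert_iff, mem_singleton_iff]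
    omega
  set S := z '' Icc a (a + 1)
  set P₀ := NonemptyInterval.pure (z a)
  set P₁ := NonemptyInterval.pure (z (a + 1))
  have hcover : chainsWithSupport T S =
      {{T}} ∪ chainsWithTopTwo T P₀ S ∪ chainsWithTopTwo T P₁ S := by
    refine Subset.antisymm (fun C hC => ?_) (union_subset
      (union_subset ?_ chainsWithTopTwo_subset) chainsWithTopTwo_subset)
    · rcases (C.erase T).eq_empty_or_nonempty with h | h
      · exact .inl (.inl (((Finset.erase_eq_empty_iff _ _).1 h).resolve_left
          (Finset.ne_empty_of_mem hC.2.1)))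
      obtain ⟨J, hJ⟩ := exists_mem_chainsWithTopTwo hC h
      obtain ⟨i, j, hai, hij, hjb, hne, -, hJprod⟩ :=
        exists_indices_of_mem_chainsWithTopTwo hz hT hJ
      rcases (by omega : i = a ∧ j = a ∨ i = a + 1 ∧ j = a + 1) with ⟨rfl, rfl⟩ | ⟨rfl, rfl⟩
      · exact .inl (.inr ((NonemptyInterval.ext hJprod : J = P₀) ▸ hJ))
      · exact .inr ((NonemptyInterval.ext hJprod : J = P₁) ▸ hJ)
    · rw [singleton_subset_iff, hS]
      exact singleton_mem_chainsWithSupport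
  have hfin : (chainsWithSupport T S).Finite := chainsWithSupport_finite ((finite_Icc _ _).image z)
  have hP₀₁ : P₀ ≠ P₁ :=
    ne_of_apply_ne (·.fst) (hz.injOn.ne ⟨le_rfl, by omega⟩ ⟨by omega, le_rfl⟩ (by omega))
  rw [hcover, ncard_union_union disjoint_singleton_chainsWithTopTwo
      disjoint_singleton_chainsWithTopTwo (disjoint_chainsWithTopTwo hP₀₁) (finite_singleton _)
      (hfin.subset chainsWithTopTwo_subset) (hfin.subset chainsWithTopTwo_subset),
    ncard_singleton,
    ncard_chainsWithTopTwo_image_Icc hz (by omega) (by omega) (by omega) (by omega) (by omega)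
      (by omega) hT (a' := a) (b' := a) rfl,
    ncard_chainsWithTopTwo_image_Icc hz (by omega) (by omega) (by omega) (by omega) (by omega)
      (by omega) hT (a' := a + 1) (b' := a + 1) rfl,
    ncard_chainsWithSupport_image_Icc_self rfl, ncard_chainsWithSupport_image_Icc_self rfl]

theorem ncard_chainsWithSupport_image_Icc_eq_add_add {A B D : NonemptyInterval P} (hab : a < b)
    (hz : StrictMonoOn z (Icc a (b + 1))) (hT : T.toProd = (z a, z (b + 1)))
    (hA : A.toProd = (z (a + 1), z (b + 1))) (hB : B.toProd = (z a, z b))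
    (hD : D.toProd = (z (a + 1), z b)) :
    (chainsWithSupport T (z '' Icc a (b + 1))).ncard =
      (chainsWithSupport A (z '' Icc (a + 1) (b + 1))).ncard +
        (chainsWithSupport B (z '' Icc a b)).ncard +
        (chainsWithSupport D (z '' Icc (a + 1) b)).ncard := by
  set S := z '' Icc a (b + 1)
  have hcover : chainsWithSupport T S =
      chainsWithTopTwo T A S ∪ chainsWithTopTwo T B S ∪ chainsWithTopTwo T D S := by
    refine Subset.antisymm (fun C hC => ?_) (union_subset
      (union_subset chainsWithTopTwo_subset chainsWithTopTwo_subset) chainsWithTopTwo_subset)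
    obtain ⟨I, hI, -⟩ :=
      apply_mem_support_erase hz.injOn hT hC.2.2 (k := a + 1) ⟨by omega, by omega⟩
    obtain ⟨J, hJ⟩ := exists_mem_chainsWithTopTwo hC ⟨I, hI⟩
    obtain ⟨i, j, hai, hij, hjb, hne, hk, hJprod⟩ :=
      exists_indices_of_mem_chainsWithTopTwo hz hT hJ
    have h₁ := hk (a + 1) ⟨by omega, by omega⟩
    have h₂ := hk b ⟨by omega, by omega⟩
    rcases (by omega : i = a + 1 ∧ j = b + 1 ∨ i = a ∧ j = b ∨ i = a + 1 ∧ j = b) with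
      ⟨rfl, rfl⟩ | ⟨rfl, rfl⟩ | ⟨rfl, rfl⟩
    · exact .inl (.inl (NonemptyInterval.ext (hJprod.trans hA.symm) ▸ hJ))
    · exact .inl (.inr (NonemptyInterval.ext (hJprod.trans hB.symm) ▸ hJ))
    · exact .inr (NonemptyInterval.ext (hJprod.trans hD.symm) ▸ hJ)
  have hfin : (chainsWithSupport T S).Finite := chainsWithSupport_finite ((finite_Icc _ _).image z)
  have hz_ne : ∀ {i j}, a ≤ i → i ≤ b + 1 → a ≤ j → j ≤ b + 1 → i ≠ j → z i ≠ z j :=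
    fun hai hi haj hj => hz.injOn.ne ⟨hai, hi⟩ ⟨haj, hj⟩
  have hAB : A ≠ B := ne_of_apply_ne (·.fst) (by simp only [hA, hB]; apply hz_ne <;> omega)
  have hAD : A ≠ D := ne_of_apply_ne (·.snd) (by simp only [hA, hD]; apply hz_ne <;> omega)
  have hBD : B ≠ D := ne_of_apply_ne (·.fst) (by simp only [hB, hD]; apply hz_ne <;> omega)
  rw [hcover, ncard_union_union (disjoint_chainsWithTopTwo hAB) (disjoint_chainsWithTopTwo hAD)
      (disjoint_chainsWithTopTwo hBD) (hfin.subset chainsWithTopTwo_subset)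
      (hfin.subset chainsWithTopTwo_subset) (hfin.subset chainsWithTopTwo_subset),
    ncard_chainsWithTopTwo_image_Icc hz (by omega) (by omega) (by omega) (by omega) (by omega)
      (by omega) hT hA,
    ncard_chainsWithTopTwo_image_Icc hz (by omega) (by omega) (by omega) (by omega) (by omega)
      (by omega) hT hB,
    ncard_chainsWithTopTwo_image_Icc hz (by omega) (by omega) (by omega) (by omega) (by omega)
      (by omega) hT hD]

theorem ncard_chainsWithSupport_image_Icc {n : ℕ} (hab : a + n = b)
    (hz : StrictMonoOn z (Icc a b)) (hT : T.toProd = (z a, z b)) :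
    (chainsWithSupport T (z '' Icc a b)).ncard = pellNum n + pellNum (n + 1) := by
  induction n using Nat.twoStepInduction generalizing a b T with
  | zero =>
    obtain rfl : b = a := by omega
    exact ncard_chainsWithSupport_image_Icc_self hT
  | one =>
    obtain rfl : b = a + 1 := by omega
    exact ncard_chainsWithSupport_image_Icc_succ hz hT
  | more n ih₀ ih₁ =>
    obtain rfl : b = a + n + 1 + 1 := by omega
    obtain ⟨A, hA⟩ := exists_toProd_eq hz.monotoneOn (i := a + 1) (j := a + n + 1 + 1)
      (by omega) (by omega) le_rfl
    obtain ⟨B, hB⟩ := exists_toProd_eq hz.monotoneOn (i := a) (j := a + n + 1)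
      le_rfl (by omega) (by omega)
    obtain ⟨D, hD⟩ := exists_toProd_eq hz.monotoneOn (i := a + 1) (j := a + n + 1)
      (by omega) (by omega) (by omega)
    rw [ncard_chainsWithSupport_image_Icc_eq_add_add (by omega) hz hT hA hB hD,
      ih₁ (by omega) (hz.mono (Icc_subset_Icc (by omega) le_rfl)) hA,
      ih₁ (by omega) (hz.mono (Icc_subset_Icc le_rfl (by omega))) hB,
      ih₀ (by omega) (hz.mono (Icc_subset_Icc (by omega) (by omega))) hD]
    simp only [pellNum]
    ring

end IntervalChain

theorem StrictMono.strictMonoOn_comp_ofNat {α : Type*} [Preorder α] {m : ℕ}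
    {z : Fin (m + 1) → α} (hz : StrictMono z) :
    StrictMonoOn (fun k => z (Fin.ofNat (m + 1) k)) (Icc 0 m) := by
  intro k hk l hl hkl
  apply hz
  have := hk.2
  have := hl.2
  rw [Fin.lt_def, Fin.val_ofNat, Fin.val_ofNat, Nat.mod_eq_of_lt, Nat.mod_eq_of_lt] <;> omega

theorem Fin.range_eq_image_Icc_ofNat {α : Type*} {m : ℕ} (z : Fin (m + 1) → α) :
    range z = (fun k => z (Fin.ofNat (m + 1) k)) '' Icc 0 m := by
  ext x
  constructor
  · rintro ⟨i, rfl⟩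
    exact ⟨i, ⟨Nat.zero_le _, Nat.lt_succ_iff.1 i.2⟩, congrArg z (Fin.ofNat_val_eq_self i)⟩
  · rintro ⟨k, -, rfl⟩
    exact mem_range_self _

theorem count_chains_with_support_general (P : Type*) [PartialOrder P] [BoundedOrder P]
    (m : ℕ) (z : Fin (m + 1) → P) (hzmono : StrictMono z)
    (hz0 : z 0 = ⊥) (hzlast : z (Fin.last m) = ⊤) :
    Set.ncard {C : Finset (NonemptyInterval P) |
        IsChain (· ≤ ·) (C : Set (NonemptyInterval P)) ∧
        (⊤ : NonemptyInterval P) ∈ C ∧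
        {x : P | ∃ I ∈ C, I.fst = x ∨ I.snd = x} = Set.range z} =
      pellNum m + pellNum (m + 1) := by
  have hlast : Fin.ofNat (m + 1) m = Fin.last m := Fin.ext (Nat.mod_eq_of_lt m.lt_succ_self)
  have hT : (⊤ : NonemptyInterval P).toProd =
      (z (Fin.ofNat (m + 1) 0), z (Fin.ofNat (m + 1) m)) := by
    rw [Fin.ofNat_zero, hlast, hz0, hzlast]
    rfl
  rw [Fin.range_eq_image_Icc_ofNat]
  exact IntervalChain.ncard_chainsWithSupport_image_Icc (zero_add m)
    hzmono.strictMonoOn_comp_ofNat hT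

/-- Let `P` be a graded poset with minimum `0̂ = ⊥` and maximum `1̂ = ⊤`,
and let `⊥ = z 0 < z 1 < ⋯ < z m = ⊤` be a chain in `P` (with `m ≥ 1`).  Then the number of
chains in the poset of intervals `I(P)` (formalized as `NonemptyInterval P`, ordered by
containment) that contain the interval `(0̂, 1̂) = ⊤` and whose support — the set of all
endpoints of the intervals in the chain — equals `{z 0, z 1, …, z m}`, is exactly
`Pell(m) + Pell(m+1)`. -/
theorem count_chains_with_support (P : Type*) [PartialOrder P] [BoundedOrder P] [Fintype P]
    (ρ : P → ℕ) (hbot : ρ ⊥ = 0) (hcov : ∀ x y : P, x ⋖ y → ρ y = ρ x + 1)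
    (m : ℕ) (hm : 1 ≤ m) (z : Fin (m + 1) → P) (hzmono : StrictMono z)
    (hz0 : z 0 = ⊥) (hzlast : z (Fin.last m) = ⊤) :
    Set.ncard {C : Finset (NonemptyInterval P) |
        IsChain (· ≤ ·) (C : Set (NonemptyInterval P)) ∧
        (⊤ : NonemptyInterval P) ∈ C ∧
        {x : P | ∃ I ∈ C, I.fst = x ∨ I.snd = x} = Set.range z} =
      pellNum m + pellNum (m + 1) :=
  count_chains_with_support_general P m z hzmono hz0 hzlast
end

section
/- Let P be a graded poset that is Eulerian. Then the graded poset of intervals Ī(P), graded by the rank function r(∅) = 0 and r((u,v)) = ρ(v) − ρ(u) + 1, is also Eulerian. -/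
/-!
Eulerianity of a locally finite poset says exactly that `∑_{x ≤ z ≤ y} (-1)^ρ(z)` vanishes for
`x < y`, so that this sum is `(-1)^ρ(x)` when `x = y` and `0` otherwise. As `ρ` is monotone, a
nonempty interval `(a, b)` has sign `(-1)^(ρ(b) - ρ(a) + 1) = -(-1)^ρ(a) (-1)^ρ(b)`, and the
intervals between `(u, v) ≤ (u', v')` are the pairs in the box `[u', u] × [v, v']`, so the signed
sum over `[(u, v), (u', v')]` factors as `-(∑_{[u', u]} (-1)^ρ) (∑_{[v, v']} (-1)^ρ)`, in which
one factor vanishes. Over `[∅, (u, v)]` the sum is `1 - ∑_{u ≤ a ≤ b ≤ v} (-1)^ρ(a) (-1)^ρ(b)`,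
and summing over `b` first leaves only the term `a = b = v`, which equals `1`.
-/

open Finset

/-- A partially ordered set with a rank function `ρ` is *Eulerian* if for every pair of
elements `x < y`, the closed interval `{z : x ≤ z ≤ y}` contains exactly as many elements
of even rank as of odd rank. -/
def IsEulerian {P : Type*} [PartialOrder P] (ρ : P → ℕ) : Prop :=
  ∀ x y : P, x < y →
    Set.ncard {z : P | x ≤ z ∧ z ≤ y ∧ Even (ρ z)} =
    Set.ncard {z : P | x ≤ z ∧ z ≤ y ∧ ¬ Even (ρ z)}

theorem neg_one_pow_sub_of_le {R : Type*} [Monoid R] [HasDistribNeg R] {a b : ℕ} (h : a ≤ b) :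
    (-1 : R) ^ (b - a) = (-1) ^ a * (-1) ^ b := by
  obtain ⟨c, rfl⟩ := Nat.exists_eq_add_of_le h
  rw [Nat.add_sub_cancel_left, pow_add, ← mul_assoc, ← pow_add, Even.neg_one_pow ⟨a, rfl⟩,
    one_mul]

theorem Finset.card_filter_even_eq_card_filter_not_even_iff {α : Type*} (s : Finset α)
    (r : α → ℕ) :
    #{z ∈ s | Even (r z)} = #{z ∈ s | ¬ Even (r z)} ↔ ∑ z ∈ s, (-1 : ℤ) ^ r z = 0 := by
  have hsum : ∑ z ∈ s, (-1 : ℤ) ^ r z = #{z ∈ s | Even (r z)} - #{z ∈ s | ¬ Even (r z)} := by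
    rw [← sum_filter_add_sum_filter_not s (fun z => Even (r z)),
      sum_congr rfl fun z hz => (mem_filter.1 hz).2.neg_one_pow,
      sum_congr rfl fun z hz => (Nat.not_even_iff_odd.1 (mem_filter.1 hz).2).neg_one_pow]
    simp only [sum_const, nsmul_eq_mul, mul_one, mul_neg]
    ring
  rw [hsum]
  omega

section Eulerian

variable {Q : Type*} [PartialOrder Q] [LocallyFiniteOrder Q] {r : Q → ℕ}

theorem isEulerian_iff_sum_Icc_neg_one_pow :
    IsEulerian r ↔ ∀ x y : Q, x < y → ∑ z ∈ Icc x y, (-1 : ℤ) ^ r z = 0 := by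
  have hset : ∀ (x y : Q) (p : Q → Prop) [DecidablePred p],
      {z | x ≤ z ∧ z ≤ y ∧ p z} = ((Icc x y).filter p : Set Q) := by
    intro x y p _
    ext z
    simp [and_assoc]
  refine forall₂_congr fun x y => imp_congr_right fun _ => ?_
  rw [hset, hset, Set.ncard_coe_finset, Set.ncard_coe_finset,
    card_filter_even_eq_card_filter_not_even_iff]

theorem IsEulerian.sum_Icc_neg_one_pow [DecidableEq Q] (h : IsEulerian r) (x y : Q) :
    ∑ z ∈ Icc x y, (-1 : ℤ) ^ r z = if x = y then (-1) ^ r x else 0 := by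
  split_ifs with hxy
  · rw [hxy, Icc_self, sum_singleton]
  · by_cases hle : x ≤ y
    · exact isEulerian_iff_sum_Icc_neg_one_pow.1 h x y (lt_of_le_of_ne hle hxy)
    · rw [Icc_eq_empty hle, sum_empty]

end Eulerian

namespace Interval

variable {α M : Type*} [PartialOrder α] [AddCommMonoid M]

def rank (ρ : α → ℕ) : Interval α → ℕ :=
  Interval.recBotCoe 0 fun J : NonemptyInterval α => ρ J.snd - ρ J.fst + 1

@[simp]
theorem rank_bot (ρ : α → ℕ) : rank ρ ⊥ = 0 :=
  rfl

theorem neg_one_pow_rank_coe {ρ : α → ℕ} (hρ : Monotone ρ) (J : NonemptyInterval α) :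
    (-1 : ℤ) ^ rank ρ J = -((-1) ^ ρ J.fst * (-1) ^ ρ J.snd) := by
  change (-1 : ℤ) ^ (ρ J.snd - ρ J.fst + 1) = _
  rw [pow_succ, neg_one_pow_sub_of_le (hρ J.fst_le_snd), mul_neg_one]

theorem sum_eq_sum_endpoints {s : Finset (Interval α)} {t : Finset (α × α)} (hbot : ⊥ ∉ s)
    (hst : ∀ J : NonemptyInterval α, (J : Interval α) ∈ s ↔ J.toProd ∈ t)
    (ht : ∀ p ∈ t, p.1 ≤ p.2) {g : Interval α → M} {f : α → α → M}
    (hgf : ∀ J : NonemptyInterval α, g J = f J.fst J.snd) :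
    ∑ z ∈ s, g z = ∑ p ∈ t, f p.1 p.2 := by
  symm
  refine sum_bij (fun p hp => ((⟨p, ht p hp⟩ : NonemptyInterval α) : Interval α))
    (fun p hp => (hst ⟨p, ht p hp⟩).2 hp) (fun p _ q _ hpq => ?_) (fun z hz => ?_)
    (fun p hp => (hgf ⟨p, ht p hp⟩).symm)
  · exact congrArg NonemptyInterval.toProd (WithBot.coe_injective hpq)
  · obtain ⟨J, rfl⟩ := WithBot.ne_bot_iff_exists.1 (ne_of_mem_of_not_mem hz hbot)
    exact ⟨J.toProd, (hst J).1 hz, rfl⟩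

-- Mathlib has no such instance on `Interval α`; any one will do, since `Icc` is determined by
-- membership.
variable [LocallyFiniteOrder α] [LocallyFiniteOrder (Interval α)]

theorem sum_Icc_coe_coe (J K : NonemptyInterval α) {g : Interval α → M} {f : α → α → M}
    (hgf : ∀ I : NonemptyInterval α, g I = f I.fst I.snd) :
    ∑ z ∈ Icc (J : Interval α) K, g z = ∑ a ∈ Icc K.fst J.fst, ∑ b ∈ Icc J.snd K.snd, f a b := by
  rw [← sum_product']
  refine sum_eq_sum_endpoints ?_ (fun I => ?_) (fun p hp => ?_) hgf
  · exact fun h => WithBot.coe_ne_bot (le_bot_iff.1 (mem_Icc.1 h).1)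
  · simp only [mem_Icc, Interval.coe_le_coe, NonemptyInterval.le_def, mem_product]
    tauto
  · simp only [mem_product, mem_Icc] at hp
    exact hp.1.2.trans (J.fst_le_snd.trans hp.2.1)

theorem sum_Icc_bot_coe (K : NonemptyInterval α) {g : Interval α → M} {f : α → α → M}
    (hgf : ∀ I : NonemptyInterval α, g I = f I.fst I.snd) :
    ∑ z ∈ Icc ⊥ (K : Interval α), g z = g ⊥ + ∑ a ∈ Icc K.fst K.snd, ∑ b ∈ Icc a K.snd, f a b := by
  classical
  rw [Icc_eq_cons_Ioc bot_le, sum_cons,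
    ← sum_finset_product' ((Icc K.fst K.snd ×ˢ Icc K.fst K.snd).filter fun p => p.1 ≤ p.2)]
  · refine congrArg _ (sum_eq_sum_endpoints left_notMem_Ioc (fun I => ?_) (fun p hp => ?_) hgf)
    · have hI : ⊥ < (I : Interval α) := bot_lt_iff_ne_bot.2 WithBot.coe_ne_bot
      simp only [mem_Ioc, hI, Interval.coe_le_coe, NonemptyInterval.le_def, mem_filter, mem_product,
        mem_Icc, I.fst_le_snd, true_and, and_true]
      exact ⟨fun h => ⟨⟨h.1, I.fst_le_snd.trans h.2⟩, h.1.trans I.fst_le_snd, h.2⟩,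
        fun h => ⟨h.1.1, h.2.2⟩⟩
    · exact (mem_filter.1 hp).2
  · intro p
    simp only [mem_filter, mem_product, mem_Icc]
    constructor
    · exact fun h => ⟨h.1.1, h.2, h.1.2.2⟩
    · exact fun h => ⟨⟨h.1, h.1.1.trans h.2.1, h.2.2⟩, h.2.1⟩

end Interval

open Interval in
theorem IsEulerian.interval_rank {α : Type*} [PartialOrder α] [Fintype α] {ρ : α → ℕ}
    (heul : IsEulerian ρ) (hρ : Monotone ρ) : IsEulerian (Interval.rank ρ) := by
  classical
  let _ : LocallyFiniteOrder α := Fintype.toLocallyFiniteOrder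
  let _ : LocallyFiniteOrder (Interval α) := Fintype.toLocallyFiniteOrder
  have hsign := neg_one_pow_rank_coe hρ
  refine isEulerian_iff_sum_Icc_neg_one_pow.2 fun x y hxy => ?_
  cases y with
  | bot => exact absurd hxy not_lt_bot
  | coe K =>
  cases x with
  | bot =>
    have hdiag : ∑ a ∈ Icc K.fst K.snd, ∑ b ∈ Icc a K.snd, (-1 : ℤ) ^ ρ a * (-1) ^ ρ b = 1 := by
      simp_rw [← mul_sum, heul.sum_Icc_neg_one_pow, mul_ite, mul_zero, sum_ite_eq', mem_Icc,
        le_rfl, K.fst_le_snd, and_self, if_true, ← pow_add, Even.neg_one_pow ⟨_, rfl⟩]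
    rw [sum_Icc_bot_coe K (f := fun a b => -((-1) ^ ρ a * (-1) ^ ρ b)) hsign, Interval.rank_bot]
    simp_rw [sum_neg_distrib, hdiag, pow_zero, add_neg_cancel]
  | coe J =>
    rw [sum_Icc_coe_coe J K (f := fun a b => -((-1) ^ ρ a * (-1) ^ ρ b)) hsign]
    simp_rw [sum_neg_distrib, ← mul_sum, ← sum_mul, heul.sum_Icc_neg_one_pow]
    have hJK : J < K := WithBot.coe_lt_coe.1 hxy
    have hne : K.fst ≠ J.fst ∨ J.snd ≠ K.snd := by
      by_contra! h
      exact hJK.ne (NonemptyInterval.ext (Prod.ext h.1.symm h.2))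
    rcases hne with h | h <;> simp [h]

theorem gradedIntervalPoset_eulerian_general (P : Type*) [PartialOrder P] [Fintype P]
    (ρ : P → ℕ) (hcov : ∀ x y : P, x ⋖ y → ρ y = ρ x + 1)
    (heul : IsEulerian ρ) :
    IsEulerian (Interval.recBotCoe 0 (fun J : NonemptyInterval P => ρ J.snd - ρ J.fst + 1)) := by
  classical
  let _ : LocallyFiniteOrder P := Fintype.toLocallyFiniteOrder
  have hρ : Monotone ρ :=
    (monotone_iff_forall_covBy ρ).2 fun x y h => (hcov x y h).symm ▸ Nat.le_succ _
  exact heul.interval_rank hρ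

/-- Let `P` be a graded poset (finite, bounded, with rank function `ρ` which
is `0` at `⊥` and increases by one along covers) that is Eulerian.  Then the graded poset of
intervals `Ī(P) = Interval P` (nonempty intervals of `P` ordered by containment with a bottom
element `∅` adjoined), graded by `r ∅ = 0` and `r (u,v) = ρ v - ρ u + 1`, is also Eulerian. -/
theorem gradedIntervalPoset_eulerian (P : Type*) [PartialOrder P] [BoundedOrder P] [Fintype P]
    (ρ : P → ℕ) (hbot : ρ ⊥ = 0) (hcov : ∀ x y : P, x ⋖ y → ρ y = ρ x + 1)
    (heul : IsEulerian ρ) :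
    IsEulerian (Interval.recBotCoe 0 (fun J : NonemptyInterval P => ρ J.snd - ρ J.fst + 1)) :=
  gradedIntervalPoset_eulerian_general P ρ hcov heul
end

section
/- For every natural number n, the identity Σ_{r=0}^{⌊n/2⌋} (−1)^r · 2^{n+1−2r} · C(n−r, n−2r) = 2(n+1) holds, where C(·,·) denotes the binomial coefficient. -/
/-!
The sum is `2 · Sₙ(2)`, where `Sₙ` is the rescaled Chebyshev polynomial of the second kind
(`Sₙ(2 cos θ) = sin((n + 1)θ) / sin θ`). Pascal's rule turns the recurrence
`Sₙ₊₂ = X Sₙ₊₁ - Sₙ` into the explicit expansion `Sₙ = ∑_{i + j = n} (-1)ʲ C(i, j) X^(i - j)`,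
and `Sₙ(2) = n + 1`.
-/

open Finset Polynomial

theorem Nat.cast_choose_succ_mul_pow_sub_succ_mul {A : Type*} [Semiring A] (x : A) (i j : ℕ) :
    (i.choose (j + 1) : A) * x ^ (i - (j + 1)) * x = i.choose (j + 1) * x ^ (i - j) := by
  rcases lt_or_ge i (j + 1) with hij | hji
  · simp [Nat.choose_eq_zero_of_lt hij]
  · rw [mul_assoc, ← pow_succ, show i - (j + 1) + 1 = i - j by omega]

theorem Finset.Nat.sum_antidiagonal_eq_sum_range_div_two_succ {M : Type*} [AddCommMonoid M]
    (f : ℕ → ℕ → M) (hf : ∀ i j, i < j → f i j = 0) (n : ℕ) :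
    ∑ p ∈ antidiagonal n, f p.1 p.2 = ∑ r ∈ range (n / 2 + 1), f (n - r) r := by
  rw [← Nat.sum_antidiagonal_swap]
  simp only [Prod.fst_swap, Prod.snd_swap]
  rw [Nat.sum_antidiagonal_eq_sum_range_succ (fun i j ↦ f j i)]
  refine (sum_subset (range_subset_range.2 (by omega)) fun r hr hr' ↦ ?_).symm
  simp only [mem_range, not_lt] at hr hr'
  exact hf _ _ (by omega)

namespace Polynomial.Chebyshev

variable (R : Type*) [CommRing R]

theorem S_eq_sum_antidiagonal (n : ℕ) :
    S R n = ∑ p ∈ antidiagonal n, (-1 : R[X]) ^ p.2 * (p.1.choose p.2 : R[X]) * X ^ (p.1 - p.2) := by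
  induction n using Nat.twoStepInduction with
  | zero => simp
  | one => simp [Nat.sum_antidiagonal_succ]
  | more n ih₀ ih₁ =>
    have pascal : ∀ p ∈ antidiagonal n,
        (-1 : R[X]) ^ (p.2 + 1) * ((p.1 + 1).choose (p.2 + 1) : R[X]) * X ^ (p.1 + 1 - (p.2 + 1)) =
          X * ((-1) ^ (p.2 + 1) * (p.1.choose (p.2 + 1) : R[X]) * X ^ (p.1 - (p.2 + 1))) -
            (-1) ^ p.2 * (p.1.choose p.2 : R[X]) * X ^ (p.1 - p.2) := fun p _ ↦ by
      rw [Nat.choose_succ_succ, Nat.add_sub_add_right, Nat.cast_add]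
      linear_combination (-1 : R[X]) ^ p.2 *
        Nat.cast_choose_succ_mul_pow_sub_succ_mul (X : R[X]) p.1 p.2
    push_cast at ih₀ ih₁
    rw [Nat.cast_add, Nat.cast_ofNat, S_add_two, ih₀, ih₁,
      Nat.sum_antidiagonal_succ', Nat.sum_antidiagonal_succ, Nat.sum_antidiagonal_succ',
      sum_congr rfl pascal, sum_sub_distrib, mul_add, mul_sum]
    simp only [Nat.choose_zero_succ, Nat.choose_zero_right, Nat.sub_zero]
    ring

theorem sum_range_neg_one_pow_mul_choose_mul_two_pow (n : ℕ) :
    ∑ r ∈ range (n / 2 + 1), (-1 : R) ^ r * ((n - r).choose r : R) * 2 ^ (n - r - r) = n + 1 := by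
  rw [← Finset.Nat.sum_antidiagonal_eq_sum_range_div_two_succ
    (fun i j ↦ (-1 : R) ^ j * (i.choose j : R) * 2 ^ (i - j))
    (fun i j hij ↦ by simp [Nat.choose_eq_zero_of_lt hij])]
  simpa [S_eq_sum_antidiagonal, eval_finsetSum] using S_eval_two R n

end Polynomial.Chebyshev

/-- For every natural number `n`,
`Σ_{r=0}^{⌊n/2⌋} (-1)^r · 2^(n+1-2r) · C(n-r, n-2r) = 2(n+1)`. -/
theorem alternating_sum_eq_two_mul_succ (n : ℕ) :
    ∑ r ∈ Finset.range (n / 2 + 1),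
      (-1 : ℤ) ^ r * 2 ^ (n + 1 - 2 * r) * (n - r).choose (n - 2 * r) = 2 * (n + 1) := by
  rw [← Polynomial.Chebyshev.sum_range_neg_one_pow_mul_choose_mul_two_pow, mul_sum]
  refine sum_congr rfl fun r hr ↦ ?_
  have hr : 2 * r ≤ n := by rw [mem_range] at hr; omega
  rw [Nat.choose_symm_of_eq_add (show n - r = (n - 2 * r) + r by omega),
    show n + 1 - 2 * r = n - r - r + 1 by omega, pow_succ]
  ring
end

section
/- Let P and Q be graded posets of the same rank n+1 whose flag f-vectors agree, i.e. f_S(P) = f_S(Q) for all S ⊆ {1,…,n}. Then the graded posets of intervals Ī(P) and Ī(Q), which are graded of rank n+2 with rank function r(∅) = 0 and r((u,v)) = ρ(v) − ρ(u) + 1, also have equal flag f-vectors: f_S(Ī(P)) = f_S(Ī(Q)) for all S ⊆ {1,…,n+1}. (Equivalently, there is a linear map I_n : ℝ^{2^n} → ℝ^{2^{n+1}} sending the flag f-vector of every graded poset of rank n+1 to the flag f-vector of its graded poset of intervals.) -/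
/-- The flag `f`-vector entry `f_S` of a poset with rank function `rk`: the number of chains
whose set of ranks is exactly `S` (one chain element for each rank in `S`). -/
noncomputable def flagF {α : Type*} [PartialOrder α] (rk : α → ℕ) (S : Finset ℕ) : ℕ :=
  Set.ncard {C : Finset α | IsChain (· ≤ ·) (C : Set α) ∧
    C.image rk = S ∧ C.card = S.card}

/-!
A chain of intervals `[u₁, v₁] < ⋯ < [u_k, v_k]` of a graded poset `P` is determined by two
pieces of data: its *shape*, the chain of intervals `[ρ uᵢ, ρ vᵢ]` of `ℕ`, which has the same
rank set `S`; and the chain formed by the endpoints `uᵢ, vᵢ` in `P`, whose rank set `T` is the set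
of endpoints of the shape. Conversely, any shape with rank set `S` and any chain of `P` with the
matching rank set `T` come from a unique chain of intervals, because the rank function is an
order embedding on a chain. Hence `f_S(Ī(P)) = ∑_σ f_{T(σ)}(P)`, the sum running over shapes `σ`
with rank set `S`. Finally `f_T(P)` is determined by the entries `f_{T'}(P)` with
`T' ⊆ {1, …, n}`: `⊥` and `⊤` lie on every maximal chain and nothing has rank above `n + 1`.
-/

section Chains

variable {α β : Type*} [PartialOrder α] [LinearOrder β]

theorem strictMono_of_covBy_rank [Finite α] {ρ : α → ℕ}
    (hcov : ∀ x y : α, x ⋖ y → ρ y = ρ x + 1) : StrictMono ρ := by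
  classical
  have := Fintype.ofFinite α
  let := Fintype.toLocallyFiniteOrder (α := α)
  exact (strictMono_iff_forall_covBy ρ).2 fun x y h => hcov x y h ▸ Nat.lt_succ_self _

theorem IsChain.le_iff_of_strictMono {s : Set α} (hs : IsChain (· ≤ ·) s) {ρ : α → β}
    (hρ : StrictMono ρ) {a b : α} (ha : a ∈ s) (hb : b ∈ s) : a ≤ b ↔ ρ a ≤ ρ b := by
  refine ⟨fun h => hρ.monotone h, fun h => ?_⟩
  rcases hs.total ha hb with hab | hba
  · exact hab
  · rcases hba.eq_or_lt with rfl | hlt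
    · exact le_rfl
    · exact absurd h (hρ hlt).not_ge

theorem IsChain.injOn_of_strictMono {s : Set α} (hs : IsChain (· ≤ ·) s) {ρ : α → β}
    (hρ : StrictMono ρ) : Set.InjOn ρ s := fun _ ha _ hb h =>
  le_antisymm ((hs.le_iff_of_strictMono hρ ha hb).2 h.le)
    ((hs.le_iff_of_strictMono hρ hb ha).2 h.ge)

end Chains

section FlagChains

variable {α : Type*} [PartialOrder α] {ρ : α → ℕ}

def flagChains (ρ : α → ℕ) (S : Finset ℕ) : Set (Finset α) :=
  {C | IsChain (· ≤ ·) (C : Set α) ∧ C.image ρ = S ∧ C.card = S.card}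

theorem flagF_eq_natCard (ρ : α → ℕ) (S : Finset ℕ) : flagF ρ S = Nat.card (flagChains ρ S) :=
  rfl

theorem mem_flagChains_iff (hρ : StrictMono ρ) {S : Finset ℕ} {C : Finset α} :
    C ∈ flagChains ρ S ↔ IsChain (· ≤ ·) (C : Set α) ∧ C.image ρ = S := by
  refine ⟨fun h => ⟨h.1, h.2.1⟩, fun ⟨hC, hCS⟩ => ⟨hC, hCS, ?_⟩⟩
  rw [← hCS, Finset.card_image_of_injOn (hC.injOn_of_strictMono hρ)]

theorem flagF_eq_zero_of_forall_ne {S : Finset ℕ} {t : ℕ} (ht : t ∈ S) (hρt : ∀ x, ρ x ≠ t) :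
    flagF ρ S = 0 := by
  rw [flagF_eq_natCard, Nat.card_eq_zero]
  refine Or.inl ⟨fun ⟨C, hC⟩ => ?_⟩
  obtain ⟨x, -, hx⟩ := Finset.mem_image.1 (hC.2.1 ▸ ht)
  exact hρt x hx

/-- `C ↦ C.erase z` is a bijection, `z` being the only element of rank `ρ z`. -/
theorem flagF_insert_of_forall_comparable (hρ : StrictMono ρ) {z : α}
    (hz : ∀ x, x ≤ z ∨ z ≤ x) {T : Finset ℕ} (hT : ρ z ∉ T) :
    flagF ρ (insert (ρ z) T) = flagF ρ T := by
  classical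
  have huniq : ∀ x, ρ x = ρ z → x = z := fun x hx => (hz x).elim
    (fun h => h.eq_of_not_lt fun hlt => (hρ hlt).ne hx)
    (fun h => (h.eq_of_not_lt fun hlt => (hρ hlt).ne hx.symm).symm)
  have hzC : ∀ C ∈ flagChains ρ T, z ∉ C := fun C hC hz =>
    hT (hC.2.1 ▸ Finset.mem_image_of_mem ρ hz)
  have hinsert : ∀ C ∈ flagChains ρ T, insert z C ∈ flagChains ρ (insert (ρ z) T) := by
    intro C hC
    rw [mem_flagChains_iff hρ] at hC ⊢
    refine ⟨?_, by rw [Finset.image_insert, hC.2]⟩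
    rw [Finset.coe_insert]
    exact hC.1.insert fun x _ _ => (hz x).symm
  have hzmem : ∀ C ∈ flagChains ρ (insert (ρ z) T), z ∈ C := fun C hC => by
    obtain ⟨x, hx, hxz⟩ := Finset.mem_image.1 (hC.2.1 ▸ Finset.mem_insert_self (ρ z) T)
    exact huniq x hxz ▸ hx
  have herase : ∀ C ∈ flagChains ρ (insert (ρ z) T), C.erase z ∈ flagChains ρ T := by
    intro C hC
    have hρz : ρ z ∉ (C.erase z).image ρ := fun h => by
      obtain ⟨x, hx, hxz⟩ := Finset.mem_image.1 h
      exact Finset.notMem_erase z C (huniq x hxz ▸ hx)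
    have hzC := hzmem C hC
    rw [mem_flagChains_iff hρ] at hC ⊢
    refine ⟨hC.1.mono (Finset.coe_subset.2 (Finset.erase_subset z C)), ?_⟩
    calc (C.erase z).image ρ = (insert (ρ z) ((C.erase z).image ρ)).erase (ρ z) :=
          (Finset.erase_insert hρz).symm
      _ = (insert (ρ z) T).erase (ρ z) := by
          rw [← Finset.image_insert, Finset.insert_erase hzC, hC.2]
      _ = T := Finset.erase_insert hT
  rw [flagF_eq_natCard, flagF_eq_natCard]
  exact Nat.card_congr
    { toFun := fun C => ⟨C.1.erase z, herase C.1 C.2⟩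
      invFun := fun C => ⟨insert z C.1, hinsert C.1 C.2⟩
      left_inv := fun C => Subtype.ext (Finset.insert_erase (hzmem C.1 C.2))
      right_inv := fun C => Subtype.ext (Finset.erase_insert (hzC C.1 C.2)) }

theorem flagF_erase_of_forall_comparable (hρ : StrictMono ρ) {z : α}
    (hz : ∀ x, x ≤ z ∨ z ≤ x) (T : Finset ℕ) : flagF ρ (T.erase (ρ z)) = flagF ρ T := by
  by_cases h : ρ z ∈ T
  · conv_rhs => rw [← Finset.insert_erase h]
    exact (flagF_insert_of_forall_comparable hρ hz (Finset.notMem_erase _ _)).symm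
  · rw [Finset.erase_eq_of_notMem h]

theorem flagF_erase_bot_erase_top [BoundedOrder α] (hρ : StrictMono ρ) (T : Finset ℕ) :
    flagF ρ ((T.erase (ρ ⊥)).erase (ρ ⊤)) = flagF ρ T := by
  rw [flagF_erase_of_forall_comparable hρ fun _ => Or.inl le_top,
    flagF_erase_of_forall_comparable hρ fun _ => Or.inr bot_le]

end FlagChains

/-- `⊥` and `⊤` can be added to any chain, and no element has rank above `n + 1`. -/
theorem flagF_congr_of_forall_subset_Icc {P Q : Type*} [PartialOrder P] [BoundedOrder P]
    [PartialOrder Q] [BoundedOrder Q] {ρP : P → ℕ} {ρQ : Q → ℕ} {n : ℕ}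
    (hP : StrictMono ρP) (hPbot : ρP ⊥ = 0) (hPtop : ρP ⊤ = n + 1)
    (hQ : StrictMono ρQ) (hQbot : ρQ ⊥ = 0) (hQtop : ρQ ⊤ = n + 1)
    (hflag : ∀ S : Finset ℕ, (∀ s ∈ S, 1 ≤ s ∧ s ≤ n) → flagF ρP S = flagF ρQ S)
    (T : Finset ℕ) : flagF ρP T = flagF ρQ T := by
  by_cases hT : ∀ t ∈ T, t ≤ n + 1
  · calc flagF ρP T = flagF ρP ((T.erase 0).erase (n + 1)) := by
          rw [← flagF_erase_bot_erase_top hP, hPbot, hPtop]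
      _ = flagF ρQ ((T.erase 0).erase (n + 1)) := hflag _ fun s hs => by
          simp only [Finset.mem_erase] at hs
          have := hT s hs.2.2
          omega
      _ = flagF ρQ T := by rw [← hQbot, ← hQtop, flagF_erase_bot_erase_top hQ]
  · obtain ⟨t, ht, htn⟩ := not_forall₂.1 hT
    have hP' : ∀ x, ρP x ≠ t := fun x => (hPtop ▸ hP.monotone le_top : ρP x ≤ n + 1).trans_lt
      (not_le.1 htn) |>.ne
    have hQ' : ∀ x, ρQ x ≠ t := fun x => (hQtop ▸ hQ.monotone le_top : ρQ x ≤ n + 1).trans_lt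
      (not_le.1 htn) |>.ne
    rw [flagF_eq_zero_of_forall_ne ht hP', flagF_eq_zero_of_forall_ne ht hQ']

section Intervals

variable {α β : Type*} [PartialOrder α]

def intervalRank (ρ : α → ℕ) : Interval α → ℕ :=
  Interval.recBotCoe 0 fun J => ρ J.snd - ρ J.fst + 1

theorem strictMono_intervalRank {ρ : α → ℕ} (hρ : StrictMono ρ) : StrictMono (intervalRank ρ) := by
  intro I I' h
  induction I' with
  | bot => exact absurd h not_lt_bot
  | coe K =>
    induction I with
    | bot => exact Nat.succ_pos _
    | coe J =>
      have hJK : J < K := WithBot.coe_lt_coe.1 h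
      obtain ⟨h1, h2⟩ := NonemptyInterval.le_def.1 hJK.le
      have hJ := hρ.monotone J.fst_le_snd
      have hK := hρ.monotone K.fst_le_snd
      show ρ J.snd - ρ J.fst + 1 < ρ K.snd - ρ K.fst + 1
      rcases h1.eq_or_lt with e1 | l1
      · rcases h2.eq_or_lt with e2 | l2
        · exact absurd (NonemptyInterval.ext (Prod.ext e1.symm e2)) hJK.ne
        · have := hρ l2; rw [e1]; omega
      · have := hρ l1; have := hρ.monotone h2; omega

theorem intervalRank_map (f : α →o ℕ) (I : Interval α) :
    intervalRank id (I.map f) = intervalRank f I := by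
  induction I <;> rfl

theorem Interval.monotone_map [Preorder β] (f : α →o β) : Monotone (Interval.map f) := by
  intro I I' h
  induction I with
  | bot => exact bot_le
  | coe J =>
    induction I' with
    | bot => exact absurd h (WithBot.not_coe_le_bot J)
    | coe K =>
      obtain ⟨h1, h2⟩ := NonemptyInterval.le_def.1 (Interval.coe_le_coe.1 h)
      exact Interval.coe_le_coe.2 (NonemptyInterval.le_def.2 ⟨f.mono h1, f.mono h2⟩)

open Classical in
noncomputable def intervalEnds : Interval α → Finset α :=
  Interval.recBotCoe ∅ fun J => {J.fst, J.snd}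

@[simp] theorem intervalEnds_bot : intervalEnds (⊥ : Interval α) = ∅ := rfl

@[simp] theorem mem_intervalEnds_coe {J : NonemptyInterval α} {x : α} :
    x ∈ intervalEnds (J : Interval α) ↔ x = J.fst ∨ x = J.snd := by
  classical exact Finset.mem_insert.trans (or_congr_right Finset.mem_singleton)

theorem fst_mem_intervalEnds (J : NonemptyInterval α) : J.fst ∈ intervalEnds (J : Interval α) :=
  mem_intervalEnds_coe.2 (Or.inl rfl)

theorem snd_mem_intervalEnds (J : NonemptyInterval α) : J.snd ∈ intervalEnds (J : Interval α) :=
  mem_intervalEnds_coe.2 (Or.inr rfl)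

theorem intervalEnds_map [PartialOrder β] [DecidableEq β] (f : α →o β) (I : Interval α) :
    intervalEnds (I.map f) = (intervalEnds I).image f := by
  induction I with
  | bot => rfl
  | coe J =>
    ext x
    change x ∈ intervalEnds ((J.map f : NonemptyInterval β) : Interval β) ↔ _
    simp [eq_comm]

theorem le_or_ge_of_mem_intervalEnds {I I' : Interval α} (h : I ≤ I') {x y : α}
    (hx : x ∈ intervalEnds I) (hy : y ∈ intervalEnds I') : x ≤ y ∨ y ≤ x := by
  induction I with
  | bot => simp at hx
  | coe J =>
    induction I' with
    | bot => simp at hy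
    | coe K =>
      obtain ⟨h1, h2⟩ := NonemptyInterval.le_def.1 (Interval.coe_le_coe.1 h)
      have hKx : K.fst ≤ x ∧ x ≤ K.snd := by
        rcases mem_intervalEnds_coe.1 hx with rfl | rfl
        · exact ⟨h1, J.fst_le_snd.trans h2⟩
        · exact ⟨h1.trans J.fst_le_snd, h2⟩
      rcases mem_intervalEnds_coe.1 hy with rfl | rfl
      · exact Or.inr hKx.1
      · exact Or.inl hKx.2

open Classical in
noncomputable def endpoints (C : Finset (Interval α)) : Finset α :=
  C.biUnion intervalEnds

theorem mem_endpoints {C : Finset (Interval α)} {x : α} :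
    x ∈ endpoints C ↔ ∃ I ∈ C, x ∈ intervalEnds I := by
  classical exact Finset.mem_biUnion

theorem intervalEnds_subset_endpoints {C : Finset (Interval α)} {I : Interval α} (hI : I ∈ C) :
    intervalEnds I ⊆ endpoints C := by
  classical exact Finset.subset_biUnion_of_mem _ hI

open Classical in
theorem endpoints_image_map [PartialOrder β] [DecidableEq β] (f : α →o β)
    (C : Finset (Interval α)) : endpoints (C.image (Interval.map f)) = (endpoints C).image f := by
  ext y
  rw [mem_endpoints, Finset.mem_image]
  constructor
  · rintro ⟨_, hI', hy⟩
    obtain ⟨I, hI, rfl⟩ := Finset.mem_image.1 hI'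
    obtain ⟨x, hx, rfl⟩ := Finset.mem_image.1 (intervalEnds_map f I ▸ hy)
    exact ⟨x, mem_endpoints.2 ⟨I, hI, hx⟩, rfl⟩
  · rintro ⟨x, hx, rfl⟩
    obtain ⟨I, hI, hxI⟩ := mem_endpoints.1 hx
    exact ⟨_, Finset.mem_image_of_mem _ hI,
      intervalEnds_map f I ▸ Finset.mem_image_of_mem _ hxI⟩

theorem IsChain.endpoints {C : Finset (Interval α)} (hC : IsChain (· ≤ ·) (C : Set (Interval α))) :
    IsChain (· ≤ ·) (endpoints C : Set α) := by
  intro x hx y hy _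
  obtain ⟨I, hI, hxI⟩ := mem_endpoints.1 hx
  obtain ⟨I', hI', hyI'⟩ := mem_endpoints.1 hy
  rcases hC.total hI hI' with h | h
  · exact le_or_ge_of_mem_intervalEnds h hxI hyI'
  · exact (le_or_ge_of_mem_intervalEnds h hyI' hxI).symm

end Intervals

section OfRanks

open Function

variable {α β : Type*} [PartialOrder α] [LinearOrder β] {f : α →o β} {D : Finset α}

theorem Interval.map_le_map_iff_of_isChain (hf : StrictMono f) (hD : IsChain (· ≤ ·) (D : Set α))
    {I I' : Interval α} (hI : intervalEnds I ⊆ D) (hI' : intervalEnds I' ⊆ D) :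
    I.map f ≤ I'.map f ↔ I ≤ I' := by
  induction I with
  | bot => exact iff_of_true bot_le bot_le
  | coe J =>
    induction I' with
    | bot => exact iff_of_false (WithBot.not_coe_le_bot _) (WithBot.not_coe_le_bot _)
    | coe K =>
      change ((J.map f : NonemptyInterval β) : Interval β) ≤ (K.map f : NonemptyInterval β) ↔ _
      rw [Interval.coe_le_coe, Interval.coe_le_coe, NonemptyInterval.le_def,
        NonemptyInterval.le_def,
        hD.le_iff_of_strictMono hf (hI' (fst_mem_intervalEnds K)) (hI (fst_mem_intervalEnds J)),
        hD.le_iff_of_strictMono hf (hI (snd_mem_intervalEnds J)) (hI' (snd_mem_intervalEnds K))]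
      rfl

variable [Nonempty α]

open Classical in
/-- Only meaningful when `D` is a chain containing elements of the ranks of both endpoints. -/
noncomputable def intervalOfRanks (ρ : α → β) (D : Finset α) : Interval β → Interval α :=
  Interval.recBotCoe ⊥ fun J =>
    if h : invFunOn ρ D J.fst ≤ invFunOn ρ D J.snd then
      ((⟨(invFunOn ρ D J.fst, invFunOn ρ D J.snd), h⟩ : NonemptyInterval α) : Interval α)
    else ⊥

theorem intervalOfRanks_spec (hf : StrictMono f) (hD : IsChain (· ≤ ·) (D : Set α))
    {I : Interval β} (hI : intervalEnds I ⊆ D.image f) :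
    intervalEnds (intervalOfRanks f D I) ⊆ D ∧ (intervalOfRanks f D I).map f = I := by
  induction I with
  | bot => exact ⟨Finset.empty_subset D, rfl⟩
  | coe J =>
    obtain ⟨h1, e1⟩ := invFunOn_pos (Finset.mem_image.1 (hI (fst_mem_intervalEnds J)))
    obtain ⟨h2, e2⟩ := invFunOn_pos (Finset.mem_image.1 (hI (snd_mem_intervalEnds J)))
    have hle : invFunOn f D J.fst ≤ invFunOn f D J.snd :=
      (hD.le_iff_of_strictMono hf h1 h2).2 (by rw [e1, e2]; exact J.fst_le_snd)
    have hdef : intervalOfRanks f D J =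
        ((⟨(invFunOn f D J.fst, invFunOn f D J.snd), hle⟩ : NonemptyInterval α) : Interval α) :=
      dif_pos hle
    rw [hdef]
    refine ⟨fun x hx => ?_, congrArg _ (NonemptyInterval.ext (Prod.ext e1 e2))⟩
    rcases mem_intervalEnds_coe.1 hx with rfl | rfl
    exacts [h1, h2]

theorem intervalOfRanks_le_intervalOfRanks (hf : StrictMono f) (hD : IsChain (· ≤ ·) (D : Set α))
    {I I' : Interval β} (hI : intervalEnds I ⊆ D.image f) (hI' : intervalEnds I' ⊆ D.image f)
    (h : I ≤ I') : intervalOfRanks f D I ≤ intervalOfRanks f D I' := by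
  obtain ⟨hJ, hJf⟩ := intervalOfRanks_spec hf hD hI
  obtain ⟨hK, hKf⟩ := intervalOfRanks_spec hf hD hI'
  exact (Interval.map_le_map_iff_of_isChain hf hD hJ hK).1 (by rwa [hJf, hKf])

theorem intervalOfRanks_map (hf : StrictMono f) (hD : IsChain (· ≤ ·) (D : Set α))
    {I : Interval α} (hI : intervalEnds I ⊆ D) : intervalOfRanks f D (I.map f) = I := by
  classical
  obtain ⟨hJ, hJf⟩ :=
    intervalOfRanks_spec hf hD ((intervalEnds_map f I).trans_subset (Finset.image_subset_image hI))
  have hmap := Interval.map_le_map_iff_of_isChain hf hD hJ hI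
  have hmap' := Interval.map_le_map_iff_of_isChain hf hD hI hJ
  exact le_antisymm (hmap.1 hJf.le) (hmap'.1 hJf.ge)

end OfRanks

section IntervalChains

variable {α : Type*} [PartialOrder α] {f : α →o ℕ} {S : Finset ℕ}

open Classical in
theorem image_map_mem_flagChains (hf : StrictMono f) {C : Finset (Interval α)}
    (hC : C ∈ flagChains (intervalRank f) S) :
    C.image (Interval.map f) ∈ flagChains (intervalRank id) S := by
  rw [mem_flagChains_iff (strictMono_intervalRank hf)] at hC
  rw [mem_flagChains_iff (strictMono_intervalRank strictMono_id), Finset.coe_image,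
    Finset.image_image]
  refine ⟨hC.1.image_of_map_rel _ _ _ fun _ _ h => Interval.monotone_map f h, ?_⟩
  rw [← hC.2]
  exact Finset.image_congr fun I _ => intervalRank_map f I

open Classical in
theorem endpoints_mem_flagChains (hf : StrictMono f) {C : Finset (Interval α)}
    (hC : C ∈ flagChains (intervalRank f) S) :
    endpoints C ∈ flagChains f (endpoints (C.image (Interval.map f))) :=
  (mem_flagChains_iff hf).2 ⟨hC.1.endpoints, (endpoints_image_map f C).symm⟩

variable {σ : Finset (Interval ℕ)} {D : Finset α}

theorem intervalEnds_subset_image (hD : D ∈ flagChains f (endpoints σ)) {I : Interval ℕ}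
    (hI : I ∈ σ) : intervalEnds I ⊆ D.image f :=
  hD.2.1 ▸ intervalEnds_subset_endpoints hI

variable [Nonempty α]

open Classical in
theorem image_intervalOfRanks_mem_flagChains (hf : StrictMono f)
    (hσ : σ ∈ flagChains (intervalRank id) S) (hD : D ∈ flagChains f (endpoints σ)) :
    σ.image (intervalOfRanks f D) ∈ flagChains (intervalRank f) S := by
  have hends := fun {I} (hI : I ∈ σ) => intervalEnds_subset_image hD hI
  rw [mem_flagChains_iff (strictMono_intervalRank strictMono_id)] at hσ
  rw [mem_flagChains_iff (strictMono_intervalRank hf), Finset.coe_image, Finset.image_image,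
    ← hσ.2]
  constructor
  · rintro _ ⟨I, hI, rfl⟩ _ ⟨I', hI', rfl⟩ -
    rcases hσ.1.total hI hI' with h | h
    · exact Or.inl (intervalOfRanks_le_intervalOfRanks hf hD.1 (hends hI) (hends hI') h)
    · exact Or.inr (intervalOfRanks_le_intervalOfRanks hf hD.1 (hends hI') (hends hI) h)
  · refine Finset.image_congr fun I hI => ?_
    rw [Function.comp_apply, ← intervalRank_map,
      (intervalOfRanks_spec hf hD.1 (hends hI)).2]

open Classical in
theorem image_map_image_intervalOfRanks (hf : StrictMono f) (hD : D ∈ flagChains f (endpoints σ)) :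
    (σ.image (intervalOfRanks f D)).image (Interval.map f) = σ := by
  rw [Finset.image_image]
  conv_rhs => rw [← Finset.image_id (s := σ)]
  exact Finset.image_congr fun I hI =>
    (intervalOfRanks_spec hf hD.1 (intervalEnds_subset_image hD hI)).2

open Classical in
theorem endpoints_image_intervalOfRanks (hf : StrictMono f)
    (hD : D ∈ flagChains f (endpoints σ)) : endpoints (σ.image (intervalOfRanks f D)) = D := by
  have hsub : endpoints (σ.image (intervalOfRanks f D)) ⊆ D := fun x hx => by
    obtain ⟨_, hI', hx⟩ := mem_endpoints.1 hx
    obtain ⟨I, hI, rfl⟩ := Finset.mem_image.1 hI'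
    exact (intervalOfRanks_spec hf hD.1 (intervalEnds_subset_image hD hI)).1 hx
  refine Finset.eq_of_subset_of_card_le hsub ?_
  calc D.card = (D.image f).card := (Finset.card_image_of_injOn (hD.1.injOn_of_strictMono hf)).symm
    _ = ((endpoints (σ.image (intervalOfRanks f D))).image f).card := by
        rw [hD.2.1, ← endpoints_image_map, image_map_image_intervalOfRanks hf hD]
    _ ≤ _ := Finset.card_image_le

end IntervalChains

open Classical in
noncomputable def flagChainsIntervalEquiv {α : Type*} [PartialOrder α] [Nonempty α]
    (f : α →o ℕ) (hf : StrictMono f) (S : Finset ℕ) :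
    flagChains (intervalRank f) S ≃
      Σ σ : flagChains (intervalRank id) S, flagChains f (endpoints σ.1) where
  toFun C := ⟨⟨C.1.image (Interval.map f), image_map_mem_flagChains hf C.2⟩,
    ⟨endpoints C.1, endpoints_mem_flagChains hf C.2⟩⟩
  invFun p := ⟨p.1.1.image (intervalOfRanks f p.2.1),
    image_intervalOfRanks_mem_flagChains hf p.1.2 p.2.2⟩
  left_inv C := by
    refine Subtype.ext ?_
    dsimp only
    rw [Finset.image_image]
    conv_rhs => rw [← Finset.image_id (s := C.1)]
    exact Finset.image_congr fun I hI =>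
      intervalOfRanks_map hf C.2.1.endpoints (intervalEnds_subset_endpoints hI)
  right_inv p := Sigma.subtype_ext (Subtype.ext (image_map_image_intervalOfRanks hf p.2.2))
    (endpoints_image_intervalOfRanks hf p.2.2)

/-- Let `P` and `Q` be graded posets of the same rank `n + 1` (finite,
bounded, with rank functions `ρP`, `ρQ` that vanish at `⊥`, increase by one along covers and
take the value `n + 1` at `⊤`) whose flag `f`-vectors agree: `f_S(P) = f_S(Q)` for all
`S ⊆ {1, …, n}`.  Then the graded posets of intervals `Ī(P) = Interval P` and
`Ī(Q) = Interval Q` (nonempty intervals ordered by containment with a bottom element `∅`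
adjoined), graded of rank `n + 2` by `r ∅ = 0`, `r (u,v) = ρ v - ρ u + 1`, also have equal
flag `f`-vectors: `f_S(Ī(P)) = f_S(Ī(Q))` for all `S ⊆ {1, …, n+1}`.  (Equivalently, a
linear map sends the flag `f`-vector of every graded poset of rank `n + 1` to the flag
`f`-vector of its graded poset of intervals.) -/
theorem flagF_gradedIntervalPoset_congr (n : ℕ) (P Q : Type*)
    [PartialOrder P] [BoundedOrder P] [Fintype P]
    [PartialOrder Q] [BoundedOrder Q] [Fintype Q]
    (ρP : P → ℕ) (ρQ : Q → ℕ)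
    (hPbot : ρP ⊥ = 0) (hPcov : ∀ x y : P, x ⋖ y → ρP y = ρP x + 1) (hPtop : ρP ⊤ = n + 1)
    (hQbot : ρQ ⊥ = 0) (hQcov : ∀ x y : Q, x ⋖ y → ρQ y = ρQ x + 1) (hQtop : ρQ ⊤ = n + 1)
    (hflag : ∀ S : Finset ℕ, (∀ s ∈ S, 1 ≤ s ∧ s ≤ n) → flagF ρP S = flagF ρQ S) :
    ∀ S : Finset ℕ, (∀ s ∈ S, 1 ≤ s ∧ s ≤ n + 1) →
      flagF (Interval.recBotCoe 0
          (fun J : NonemptyInterval P => ρP J.snd - ρP J.fst + 1)) S =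
      flagF (Interval.recBotCoe 0
          (fun J : NonemptyInterval Q => ρQ J.snd - ρQ J.fst + 1)) S := by
  intro S _
  have : Nonempty P := ⟨⊥⟩
  have : Nonempty Q := ⟨⊥⟩
  have hP : StrictMono ρP := strictMono_of_covBy_rank hPcov
  have hQ : StrictMono ρQ := strictMono_of_covBy_rank hQcov
  have hchains (T : Finset ℕ) : Nonempty (flagChains ρP T ≃ flagChains ρQ T) :=
    Finite.card_eq.1 (flagF_congr_of_forall_subset_Icc hP hPbot hPtop hQ hQbot hQtop hflag T)
  rw [flagF_eq_natCard, flagF_eq_natCard]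
  exact Nat.card_congr <| (flagChainsIntervalEquiv ⟨ρP, hP.monotone⟩ hP S).trans <|
    (Equiv.sigmaCongrRight fun σ => (hchains _).some).trans
      (flagChainsIntervalEquiv ⟨ρQ, hQ.monotone⟩ hQ S).symm
end
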